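/- Let P^f ∈ ℝ^{d×d} and P^a ∈ ℝ^{d×d} be symmetric positive definite. Then the matrix A = (P^a)^{1/2} [ (P^a)^{1/2} P^f (P^a)^{1/2} ]^{-1/2} (P^a)^{1/2} is symmetric positive definite and satisfies A P^f A^T = P^a. -/

import Mathlib

open Matrix
open scoped ComplexOrder

/-- The positive semidefinite square root of a positive semidefinite matrix
(the definition `Matrix.PosSemidef.sqrt` of the older Mathlib, since removed). -/
noncomputable def Matrix.PosSemidef.sqrt {n 𝕜 : Type*} [Fintype n] [DecidableEq n] [RCLike 𝕜]
    {A : Matrix n n 𝕜} (hA : A.PosSemidef) : Matrix n n 𝕜 :=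
  hA.1.eigenvectorUnitary.1 * diagonal ((↑) ∘ (√·) ∘ hA.1.eigenvalues) *
    (star hA.1.eigenvectorUnitary : Matrix n n 𝕜)

/-! With `S = (P^a)^{1/2}` and `C = B^{1/2}`, where `B = S P^f S`, the map is `A = S C⁻¹ S`.
It is a congruence `star S * C⁻¹ * S` of the positive definite `C⁻¹`, hence positive definite,
and `A P^f A = S C⁻¹ (S P^f S) C⁻¹ S = S C⁻¹ C C C⁻¹ S = S S = P^a`. -/

namespace Matrix

variable {n 𝕜 : Type*} [Fintype n] [DecidableEq n] [RCLike 𝕜]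

theorem PosSemidef.sqrt_mul_self {A : Matrix n n 𝕜} (hA : A.PosSemidef) :
    hA.sqrt * hA.sqrt = A := by
  set U : Matrix n n 𝕜 := (hA.1.eigenvectorUnitary : Matrix n n 𝕜)
  have hU : star U * U = 1 := Unitary.coe_star_mul_self _
  have hD : diagonal ((↑) ∘ (√·) ∘ hA.1.eigenvalues : n → 𝕜) *
      diagonal ((↑) ∘ (√·) ∘ hA.1.eigenvalues) = diagonal (RCLike.ofReal ∘ hA.1.eigenvalues) := by
    rw [diagonal_mul_diagonal]
    congr 1
    funext i
    simp only [Function.comp, ← RCLike.ofReal_mul, Real.mul_self_sqrt (hA.eigenvalues_nonneg i)]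
  conv_rhs => rw [hA.1.spectral_theorem, Unitary.conjStarAlgAut_apply, ← hD]
  calc hA.sqrt * hA.sqrt
      = U * diagonal ((↑) ∘ (√·) ∘ hA.1.eigenvalues) * (star U * U) *
          diagonal ((↑) ∘ (√·) ∘ hA.1.eigenvalues) * star U := by
        simp only [PosSemidef.sqrt, U, Matrix.mul_assoc]
    _ = _ := by rw [hU, Matrix.mul_one]; simp only [U, Matrix.mul_assoc]

theorem PosSemidef.posSemidef_sqrt {A : Matrix n n 𝕜} (hA : A.PosSemidef) :
    hA.sqrt.PosSemidef := by
  have hD : (diagonal ((↑) ∘ (√·) ∘ hA.1.eigenvalues : n → 𝕜)).PosSemidef :=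
    posSemidef_diagonal_iff.mpr fun i => RCLike.ofReal_nonneg.mpr (Real.sqrt_nonneg _)
  have := hD.mul_mul_conjTranspose_same (hA.1.eigenvectorUnitary : Matrix n n 𝕜)
  rwa [← star_eq_conjTranspose] at this

theorem PosDef.posDef_sqrt {A : Matrix n n 𝕜} (hA : A.PosDef) : hA.posSemidef.sqrt.PosDef :=
  hA.posSemidef.posSemidef_sqrt.posDef_iff_isUnit.mpr <|
    isUnit_mul_self_iff.mp (by rw [hA.posSemidef.sqrt_mul_self]; exact hA.isUnit)

theorem PosDef.mul_mul_same_of_posDef {M S : Matrix n n 𝕜} (hM : M.PosDef) (hS : S.PosDef) :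
    (S * M * S).PosDef := by
  simpa only [star_eq_conjTranspose, hS.isHermitian.eq] using
    hS.isUnit.posDef_star_left_conjugate_iff.mpr hM

end Matrix

theorem Matrix.mul_inv_mul_mul_mul_inv_mul_eq_mul_self {n R : Type*} [Fintype n] [DecidableEq n]
    [CommRing R] {S P C : Matrix n n R} (hC : IsUnit C) (h : S * P * S = C * C) :
    S * C⁻¹ * S * P * (S * C⁻¹ * S) = S * S := by
  have hC' : IsUnit C.det := (isUnit_iff_isUnit_det C).mp hC
  calc S * C⁻¹ * S * P * (S * C⁻¹ * S)
      = S * C⁻¹ * (S * P * S) * C⁻¹ * S := by simp only [Matrix.mul_assoc]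
    _ = S * (C⁻¹ * C) * (C * C⁻¹) * S := by rw [h]; simp only [Matrix.mul_assoc]
    _ = S * S := by rw [nonsing_inv_mul C hC', mul_nonsing_inv C hC', Matrix.mul_one,
        Matrix.mul_one]

theorem optimal_gaussian_transport_matrix_general
    {d : ℕ} (Pf Pa : Matrix (Fin d) (Fin d) ℝ)
    (hPa : Pa.PosDef)
    (B : Matrix (Fin d) (Fin d) ℝ)
    (hB : B = hPa.posSemidef.sqrt * Pf * hPa.posSemidef.sqrt)
    (hBpd : B.PosDef)
    (A : Matrix (Fin d) (Fin d) ℝ)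
    (hA : A = hPa.posSemidef.sqrt * (hBpd.posSemidef.sqrt)⁻¹ * hPa.posSemidef.sqrt) :
    A.PosDef ∧ A * Pf * Aᵀ = Pa := by
  have hApd : A.PosDef := hA ▸ hBpd.posDef_sqrt.inv.mul_mul_same_of_posDef hPa.posDef_sqrt
  have hAT : Aᵀ = A := (isHermitian_iff_isSymm.mp hApd.isHermitian).eq
  refine ⟨hApd, ?_⟩
  rw [hAT, hA, mul_inv_mul_mul_mul_inv_mul_eq_mul_self hBpd.posDef_sqrt.isUnit
    (hB ▸ hBpd.posSemidef.sqrt_mul_self.symm)]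
  exact hPa.posSemidef.sqrt_mul_self

/-- The optimal transport map between `N(0, P^f)` and `N(0, P^a)`:
`A = (P^a)^{1/2} [(P^a)^{1/2} P^f (P^a)^{1/2}]^{-1/2} (P^a)^{1/2}` is symmetric
positive definite and satisfies `A P^f Aᵀ = P^a`. -/
theorem optimal_gaussian_transport_matrix
    {d : ℕ} (Pf Pa : Matrix (Fin d) (Fin d) ℝ)
    (hPf : Pf.PosDef) (hPa : Pa.PosDef)
    (B : Matrix (Fin d) (Fin d) ℝ)
    (hB : B = hPa.posSemidef.sqrt * Pf * hPa.posSemidef.sqrt)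
    (hBpd : B.PosDef)
    (A : Matrix (Fin d) (Fin d) ℝ)
    (hA : A = hPa.posSemidef.sqrt * (hBpd.posSemidef.sqrt)⁻¹ * hPa.posSemidef.sqrt) :
    A.PosDef ∧ A * Pf * Aᵀ = Pa :=
  optimal_gaussian_transport_matrix_general Pf Pa hPa B hB hBpd A hA
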